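/- arXiv:2303.02997 — 5 statements merged into one kernel-verified Lean document; each statement's English description precedes it below -/
import Mathlib

section
/- Let p, q, c be real numbers with p ≤ 0 ≤ q, and let w(p), w(q), w(c) ≥ 0 be non-negative weights. Suppose w(c) + |c| ≤ w(p) + |p| and w(c) + |c| ≤ w(q) + |q| (i.e., the additively weighted distance from c to the origin, where the origin carries weight 0, is at most that of p and of q). Then (w(p) + |p − c| + w(c)) + (w(c) + |c − q| + w(q)) ≤ 2·(w(p) + |p − q| + w(q)); that is, the two-edge path p → c → q has additively weighted length at most twice d_w(p, q). -/
/-- Key inequality (Equation (1)) in the proof of the 1-dimensional additively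
weighted 2-spanner: the two-edge path `p → c → q` has additively weighted length
at most twice `d_w(p, q)`. -/
theorem two_edge_path_weighted_length
    (p q c wp wq wc : ℝ)
    (hp : p ≤ 0) (hq : 0 ≤ q)
    (hwp : 0 ≤ wp) (hwq : 0 ≤ wq) (hwc : 0 ≤ wc)
    (hcp : wc + |c| ≤ wp + |p|) (hcq : wc + |c| ≤ wq + |q|) :
    (wp + |p - c| + wc) + (wc + |c - q| + wq) ≤ 2 * (wp + |p - q| + wq) := by
  have h1 : |p - c| ≤ |p| + |c| := abs_sub p c
  have h2 : |c - q| ≤ |c| + |q| := abs_sub c q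
  have hpq : |p - q| = |p| + |q| := by
    rw [abs_of_nonpos hp, abs_of_nonneg hq, abs_of_nonpos (by linarith)]; ring
  linarith
end

section
/- Let S be a finite set of n sites, given by an injective position map pos : S → ℝ and a weight function w : S → ℝ with w(p) ≥ 0 for all p ∈ S. Then there exists a set E of unordered pairs of distinct sites with |E| ≤ n·(⌊log₂ n⌋ + 1) such that for all distinct p, q ∈ S there exist sites x₀ = p, x₁, …, x_j = q with 1 ≤ j ≤ 2, each consecutive pair {x_i, x_{i+1}} belonging to E, and ∑_{i=0}^{j−1} d_w(x_i, x_{i+1}) ≤ 2·d_w(p, q). -/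
/-- The additively weighted distance between two sites on the real line:
`d_w(p, q) = w(p) + |pos(p) − pos(q)| + w(q)`. -/
def dw {S : Type*} (pos : S → ℝ) (w : S → ℝ) (p q : S) : ℝ :=
  w p + |pos p - pos q| + w q

/-!
Split the sites into the `⌊n/2⌋` leftmost ones and the rest. If `s` is a point
between the halves and `r` minimizes `w r + |pos r - s|`, then for `p` left and `q` right of `s`
the triangle inequality through `s` gives `d_w(p, r) + d_w(r, q) ≤ 2 d_w(p, q)`. So the star of
edges joining every site to `r` serves all crossing pairs with at most two edges; recursing on
the halves costs at most `n` edges per level over `⌊log₂ n⌋ + 1` levels.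
-/

open Finset

theorem Finset.exists_subset_card_eq_forall_le_sdiff {α β : Type*} [DecidableEq α]
    [LinearOrder β] (f : α → β) (T : Finset α) {k : ℕ} (hk : k ≤ #T) :
    ∃ A ⊆ T, #A = k ∧ ∀ a ∈ A, ∀ b ∈ T \ A, f a ≤ f b := by
  induction k with
  | zero => exact ⟨∅, empty_subset T, card_empty, by simp⟩
  | succ k ih =>
    obtain ⟨A, hAT, hAk, hAle⟩ := ih (by omega)
    have hrest : (T \ A).Nonempty := by
      rw [← card_pos, card_sdiff_of_subset hAT]
      omega
    obtain ⟨b, hb, hbmin⟩ := exists_min_image (T \ A) f hrest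
    have hbA : b ∉ A := (mem_sdiff.mp hb).2
    refine ⟨insert b A, insert_subset (mem_sdiff.mp hb).1 hAT,
      by rw [card_insert_of_notMem hbA, hAk], ?_⟩
    intro a ha c hc
    have hc' : c ∈ T \ A := by
      simp only [mem_sdiff, mem_insert, not_or] at hc ⊢
      exact ⟨hc.1, hc.2.2⟩
    rcases mem_insert.mp ha with rfl | ha
    · exact hbmin c hc'
    · exact hAle a ha c hc'

section Spanner

variable {S : Type*} (pos w : S → ℝ)

theorem dw_nonneg (hw : ∀ p, 0 ≤ w p) (p q : S) : 0 ≤ dw pos w p q := by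
  unfold dw
  linarith [hw p, hw q, abs_nonneg (pos p - pos q)]

theorem dw_add_dw_le_of_between {p q r : S} {s : ℝ}
    (hs : |pos p - s| + |pos q - s| ≤ |pos p - pos q|)
    (hrp : w r + |pos r - s| ≤ w p + |pos p - s|)
    (hrq : w r + |pos r - s| ≤ w q + |pos q - s|) :
    dw pos w p r + dw pos w r q ≤ 2 * dw pos w p q := by
  have hpr : |pos p - pos r| ≤ |pos p - s| + |pos r - s| := by
    simpa [abs_sub_comm] using abs_sub_le (pos p) s (pos r)
  have hrq' : |pos r - pos q| ≤ |pos r - s| + |pos q - s| := by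
    simpa [abs_sub_comm] using abs_sub_le (pos r) s (pos q)
  unfold dw
  linarith

def HasTwoHopPath (E : Finset (Sym2 S)) (p q : S) : Prop :=
  ∃ (j : ℕ) (x : ℕ → S), 1 ≤ j ∧ j ≤ 2 ∧ x 0 = p ∧ x j = q ∧
    (∀ i < j, s(x i, x (i + 1)) ∈ E) ∧
    (∑ i ∈ Finset.range j, dw pos w (x i) (x (i + 1))) ≤ 2 * dw pos w p q

variable {pos w}

theorem HasTwoHopPath.mono {E F : Finset (Sym2 S)} (hEF : E ⊆ F) {p q : S}
    (h : HasTwoHopPath pos w E p q) : HasTwoHopPath pos w F p q := by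
  obtain ⟨j, x, h1, h2, h0, hj, hE, hsum⟩ := h
  exact ⟨j, x, h1, h2, h0, hj, fun i hi => hEF (hE i hi), hsum⟩

theorem hasTwoHopPath_of_mem {E : Finset (Sym2 S)} {p q : S} (hpq : s(p, q) ∈ E)
    (hd : 0 ≤ dw pos w p q) : HasTwoHopPath pos w E p q := by
  refine ⟨1, fun i => if i = 0 then p else q, le_rfl, one_le_two, rfl, rfl, ?_, ?_⟩
  · intro i hi
    obtain rfl : i = 0 := by omega
    simpa using hpq
  · simp only [sum_range_one, zero_add, one_ne_zero, if_true, if_false]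
    linarith

theorem hasTwoHopPath_of_mem_of_mem {E : Finset (Sym2 S)} {p q r : S} (hpr : s(p, r) ∈ E)
    (hrq : s(r, q) ∈ E) (hd : dw pos w p r + dw pos w r q ≤ 2 * dw pos w p q) :
    HasTwoHopPath pos w E p q := by
  refine ⟨2, fun i => if i = 0 then p else if i = 1 then r else q, one_le_two, le_rfl, rfl, rfl,
    ?_, ?_⟩
  · intro i hi
    interval_cases i <;> simpa
  · simpa [sum_range_succ] using hd

def IsTwoHopSpanner (pos w : S → ℝ) (T : Finset S) (E : Finset (Sym2 S)) : Prop :=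
  ∀ p ∈ T, ∀ q ∈ T, p ≠ q → HasTwoHopPath pos w E p q

theorem IsTwoHopSpanner.of_card_le_one {T : Finset S} (hT : #T ≤ 1) (E : Finset (Sym2 S)) :
    IsTwoHopSpanner pos w T E :=
  fun p hp q hq hpq => absurd (card_le_one.mp hT p hp q hq) hpq

section Star

variable [DecidableEq S]

def starEdges (T : Finset S) (r : S) : Finset (Sym2 S) :=
  (T.erase r).image fun x => s(x, r)

theorem card_starEdges_le (T : Finset S) (r : S) : #(starEdges T r) ≤ #T :=
  card_image_le.trans card_erase_le

theorem not_isDiag_of_mem_starEdges {T : Finset S} {r : S} {e : Sym2 S}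
    (he : e ∈ starEdges T r) : ¬ e.IsDiag := by
  obtain ⟨x, hx, rfl⟩ := mem_image.mp he
  simpa using (mem_erase.mp hx).1

theorem mk_mem_starEdges {T : Finset S} {r x : S} (hx : x ∈ T) (hxr : x ≠ r) :
    s(x, r) ∈ starEdges T r :=
  mem_image_of_mem _ (mem_erase.mpr ⟨hxr, hx⟩)

theorem hasTwoHopPath_starEdges (hw : ∀ p, 0 ≤ w p) {T : Finset S} {p q r : S} (hp : p ∈ T)
    (hq : q ∈ T) (hpq : p ≠ q) (hd : dw pos w p r + dw pos w r q ≤ 2 * dw pos w p q) :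
    HasTwoHopPath pos w (starEdges T r) p q := by
  by_cases hpr : p = r
  · subst hpr
    exact hasTwoHopPath_of_mem (Sym2.eq_swap ▸ mk_mem_starEdges hq hpq.symm)
      (dw_nonneg pos w hw p q)
  by_cases hqr : q = r
  · subst hqr
    exact hasTwoHopPath_of_mem (mk_mem_starEdges hp hpq) (dw_nonneg pos w hw p q)
  exact hasTwoHopPath_of_mem_of_mem (mk_mem_starEdges hp hpr)
    (Sym2.eq_swap ▸ mk_mem_starEdges hq hqr) hd

theorem IsTwoHopSpanner.union_starEdges (hw : ∀ p, 0 ≤ w p) {A B : Finset S}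
    {EA EB : Finset (Sym2 S)}
    (hEA : IsTwoHopSpanner pos w A EA) (hEB : IsTwoHopSpanner pos w B EB) {s : ℝ}
    (hAs : ∀ a ∈ A, pos a ≤ s) (hBs : ∀ b ∈ B, s ≤ pos b) {r : S}
    (hr : ∀ x ∈ A ∪ B, w r + |pos r - s| ≤ w x + |pos x - s|) :
    IsTwoHopSpanner pos w (A ∪ B) (EA ∪ EB ∪ starEdges (A ∪ B) r) := by
  have between : ∀ a ∈ A, ∀ b ∈ B, |pos a - s| + |pos b - s| ≤ |pos a - pos b| := by
    intro a ha b hb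
    rw [abs_of_nonpos (by linarith [hAs a ha]), abs_of_nonneg (by linarith [hBs b hb]),
      abs_of_nonpos (by linarith [hAs a ha, hBs b hb])]
    linarith
  have cross : ∀ p ∈ A ∪ B, ∀ q ∈ A ∪ B, p ≠ q →
      |pos p - s| + |pos q - s| ≤ |pos p - pos q| →
      HasTwoHopPath pos w (EA ∪ EB ∪ starEdges (A ∪ B) r) p q := fun p hp q hq hpq hs =>
    (hasTwoHopPath_starEdges hw hp hq hpq
      (dw_add_dw_le_of_between pos w hs (hr p hp) (hr q hq))).mono subset_union_right
  intro p hp q hq hpq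
  rcases mem_union.mp hp with hpA | hpB <;> rcases mem_union.mp hq with hqA | hqB
  · exact (hEA p hpA q hqA hpq).mono (subset_union_left.trans subset_union_left)
  · exact cross p hp q hq hpq (between p hpA q hqB)
  · exact cross p hp q hq hpq (by simpa [add_comm, abs_sub_comm] using between q hqA p hpB)
  · exact (hEB p hpB q hqB hpq).mono (subset_union_right.trans subset_union_left)

theorem exists_isTwoHopSpanner_of_card_le_two_pow (hw : ∀ p, 0 ≤ w p) (d : ℕ) (T : Finset S)
    (hT : #T ≤ 2 ^ d) :
    ∃ E : Finset (Sym2 S),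
      (∀ e ∈ E, ¬ e.IsDiag) ∧ #E ≤ d * #T ∧ IsTwoHopSpanner pos w T E := by
  induction d generalizing T with
  | zero => exact ⟨∅, by simp, by simp, .of_card_le_one (by simpa using hT) ∅⟩
  | succ d ih =>
    rcases T.eq_empty_or_nonempty with rfl | hTne
    · exact ⟨∅, by simp, by simp, .of_card_le_one (by simp) ∅⟩
    obtain ⟨A, hAT, hAcard, hAle⟩ :=
      exists_subset_card_eq_forall_le_sdiff pos T (Nat.div_le_self #T 2)
    have hsplit : #A + #(T \ A) = #T := by rw [add_comm, card_sdiff_add_card_eq_card hAT]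
    have hrest : (T \ A).Nonempty := by
      rw [← card_pos]
      have := card_pos.mpr hTne
      omega
    obtain ⟨b, hb, hbmin⟩ := exists_min_image (T \ A) pos hrest
    obtain ⟨r, -, hr⟩ := exists_min_image T (fun x => w x + |pos x - pos b|) hTne
    obtain ⟨EA, hEAd, hEAc, hEA⟩ := ih A (by rw [pow_succ] at hT; omega)
    obtain ⟨EB, hEBd, hEBc, hEB⟩ := ih (T \ A) (by rw [pow_succ] at hT; omega)
    have hunion : A ∪ T \ A = T := union_sdiff_of_subset hAT
    refine ⟨EA ∪ EB ∪ starEdges T r, ?_, ?_, ?_⟩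
    · intro e he
      simp only [mem_union] at he
      rcases he with (he | he) | he
      exacts [hEAd e he, hEBd e he, not_isDiag_of_mem_starEdges he]
    · calc #(EA ∪ EB ∪ starEdges T r) ≤ #EA + #EB + #(starEdges T r) :=
            (card_union_le _ _).trans (Nat.add_le_add_right (card_union_le _ _) _)
        _ ≤ d * #A + d * #(T \ A) + #T := by gcongr; exact card_starEdges_le T r
        _ = (d + 1) * #T := by rw [← mul_add, hsplit]; ring
    · rw [← hunion] at hr ⊢
      exact hEA.union_starEdges hw hEB (fun a ha => hAle a ha b hb) hbmin hr

end Star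

end Spanner

theorem one_dim_weighted_two_spanner_general
    (S : Type*) [Fintype S] (n : ℕ) (hn : Fintype.card S = n)
    (pos : S → ℝ)
    (w : S → ℝ) (hw : ∀ p, 0 ≤ w p) :
    ∃ E : Finset (Sym2 S),
      (∀ e ∈ E, ¬ e.IsDiag) ∧
      E.card ≤ n * (Nat.log 2 n + 1) ∧
      ∀ p q : S, p ≠ q →
        ∃ (j : ℕ) (x : ℕ → S), 1 ≤ j ∧ j ≤ 2 ∧ x 0 = p ∧ x j = q ∧
          (∀ i < j, s(x i, x (i + 1)) ∈ E) ∧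
          (∑ i ∈ Finset.range j, dw pos w (x i) (x (i + 1))) ≤ 2 * dw pos w p q := by
  classical
  have hcard : #(univ : Finset S) ≤ 2 ^ (Nat.log 2 n + 1) := by
    rw [card_univ, hn]
    exact (Nat.lt_pow_succ_log_self one_lt_two n).le
  obtain ⟨E, hdiag, hE, hspan⟩ :=
    exists_isTwoHopSpanner_of_card_le_two_pow hw (Nat.log 2 n + 1) univ hcard
  refine ⟨E, hdiag, ?_, fun p q => hspan p (mem_univ p) q (mem_univ q)⟩
  rwa [card_univ, hn, mul_comm] at hE

/-- Existence of a 1-dimensional additively weighted 2-spanner of size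
`O(n log n)` in which every pair of sites is joined by a path of at most
two edges, of total weighted length at most `2 · d_w(p, q)`. -/
theorem one_dim_weighted_two_spanner
    (S : Type*) [Fintype S] [DecidableEq S] (n : ℕ) (hn : Fintype.card S = n)
    (pos : S → ℝ) (hpos : Function.Injective pos)
    (w : S → ℝ) (hw : ∀ p, 0 ≤ w p) :
    ∃ E : Finset (Sym2 S),
      (∀ e ∈ E, ¬ e.IsDiag) ∧
      E.card ≤ n * (Nat.log 2 n + 1) ∧
      ∀ p q : S, p ≠ q →
        ∃ (j : ℕ) (x : ℕ → S), 1 ≤ j ∧ j ≤ 2 ∧ x 0 = p ∧ x j = q ∧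
          (∀ i < j, s(x i, x (i + 1)) ∈ E) ∧
          (∑ i ∈ Finset.range j, dw pos w (x i) (x (i + 1))) ≤ 2 * dw pos w p q :=
  one_dim_weighted_two_spanner_general S n hn pos w hw
end

section
/- Let k ≥ 1 be an integer, let a : {0, 1, …, 2k} → ℝ be points and w : {0, 1, …, 2k} → ℝ non-negative weights. Write D(i) = w(i) + |a(i)| and d_w(i, j) = w(i) + |a(i) − a(j)| + w(j). Assume a(0) ≤ 0 ≤ a(2k), D(i) ≤ D(0) for all 1 ≤ i ≤ k − 1, D(k) ≤ min(D(0), D(2k)), and D(i) ≤ D(2k) for all k + 1 ≤ i ≤ 2k − 1. Then ∑_{i=0}^{2k−1} d_w(i, i+1) ≤ 2k · d_w(0, 2k). -/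
/-- The spanning-ratio calculation for the 1-dimensional `2k`-spanner:
a path from a site (index `0`) through its chain of group centers, the global
center (index `k`), the other chain of centers, to a site (index `2k`) on the
other side of the splitting origin has total additively weighted length at most
`2k · d_w(0, 2k)`. -/
theorem center_chain_path_length
    (k : ℕ) (hk : 1 ≤ k) (a w : ℕ → ℝ)
    (hw : ∀ i ≤ 2 * k, 0 ≤ w i)
    (ha0 : a 0 ≤ 0) (ha2k : 0 ≤ a (2 * k))
    (hD1 : ∀ i, 1 ≤ i → i ≤ k - 1 → w i + |a i| ≤ w 0 + |a 0|)
    (hDk : w k + |a k| ≤ min (w 0 + |a 0|) (w (2 * k) + |a (2 * k)|))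
    (hD2 : ∀ i, k + 1 ≤ i → i ≤ 2 * k - 1 → w i + |a i| ≤ w (2 * k) + |a (2 * k)|) :
    ∑ i ∈ Finset.range (2 * k), (w i + |a i - a (i + 1)| + w (i + 1)) ≤
      (2 * k : ℝ) * (w 0 + |a 0 - a (2 * k)| + w (2 * k)) := by
  have hDle : ∀ i, i ≤ k → w i + |a i| ≤ w 0 + |a 0| := by
    intro i hik
    rcases Nat.eq_zero_or_pos i with h0 | h0
    · simp [h0]
    rcases eq_or_lt_of_le hik with hek | hlt
    · subst hek; exact hDk.trans (min_le_left _ _)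
    · exact hD1 i h0 (by omega)
  have hDge : ∀ i, k ≤ i → i ≤ 2 * k → w i + |a i| ≤ w (2 * k) + |a (2 * k)| := by
    intro i hki hi2
    rcases eq_or_lt_of_le hki with hek | hlt
    · subst hek; exact hDk.trans (min_le_right _ _)
    rcases eq_or_lt_of_le hi2 with he2 | h2
    · rw [he2]
    · exact hD2 i (by omega) (by omega)
  have htri : ∀ x y : ℝ, |x - y| ≤ |x| + |y| := fun x y => by
    calc |x - y| = |x + (-y)| := by ring_nf
    _ ≤ |x| + |(-y)| := abs_add_le _ _
    _ = |x| + |y| := by rw [abs_neg]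
  have hterm : ∀ i ∈ Finset.range (2 * k),
      w i + |a i - a (i + 1)| + w (i + 1) ≤
        if i < k then 2 * (w 0 + |a 0|) else 2 * (w (2 * k) + |a (2 * k)|) := by
    intro i hi
    rw [Finset.mem_range] at hi
    have ht := htri (a i) (a (i + 1))
    split_ifs with h
    · have h1 := hDle i (by omega)
      have h2 := hDle (i + 1) (by omega)
      linarith
    · have h1 := hDge i (by omega) (by omega)
      have h2 := hDge (i + 1) (by omega) (by omega)
      linarith
  have habs : |a 0 - a (2 * k)| = |a 0| + |a (2 * k)| := by
    rw [abs_of_nonpos ha0, abs_of_nonneg ha2k, abs_of_nonpos (by linarith)]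
    ring
  calc ∑ i ∈ Finset.range (2 * k), (w i + |a i - a (i + 1)| + w (i + 1))
      ≤ ∑ i ∈ Finset.range (2 * k),
          (if i < k then 2 * (w 0 + |a 0|) else 2 * (w (2 * k) + |a (2 * k)|)) :=
        Finset.sum_le_sum hterm
    _ = ∑ i ∈ Finset.range (k + k),
          (if i < k then 2 * (w 0 + |a 0|) else 2 * (w (2 * k) + |a (2 * k)|)) := by
        rw [two_mul]
    _ = (k : ℝ) * (2 * (w 0 + |a 0|)) + (k : ℝ) * (2 * (w (2 * k) + |a (2 * k)|)) := by
        rw [Finset.sum_range_add]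
        congr 1
        · rw [Finset.sum_congr rfl fun i hi => if_pos (Finset.mem_range.mp hi)]
          simp [mul_comm]
        · rw [Finset.sum_congr rfl fun i hi => if_neg (by omega)]
          simp [mul_comm]
    _ ≤ (2 * k : ℝ) * (w 0 + |a 0 - a (2 * k)| + w (2 * k)) := by
        exact le_of_eq (by rw [habs]; ring)
end

section
/- Let k ≥ 1 and c₁ ≥ 0 be integers, and let c₂ ≥ 0 and C > 0 be reals. Let T : ℕ → ℝ → ℝ be a function such that: (base case) T(0, m) ≤ C·(m + 1) for all m ≥ 0; and (recursive case) for all L ≥ 0 and all m ≥ 0 there exist m₁, m₂ ≥ 0 with m₁ + m₂ = m + c₂ and T(L+1, m) ≤ T(L, m₁) + T(L, m₂) + C·(m·2^{(L+1)/k} + 2^{L+1}·(L+1)^{c₁}). Then there exists a constant C' > 0 (depending only on k, c₁, c₂, C) such that for all L ≥ 0 and all m ≥ 0, T(L, m) ≤ C'·(m·2^{L/k} + 2^L·(L+1)^{c₁+1}). -/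
set_option maxHeartbeats 1000000


/-- The recursion `T(n, m) = T(n/2, m₁) + T(n/2, m₂) + O(m·n^{1/k} + n·log^{c₁} n)`
with `m₁ + m₂ = m + c₂`, stated for problem sizes `n = 2^L`, solves to
`T(n, m) = O(m·n^{1/k} + n·log^{c₁+1} n)`. -/
theorem recursion_solves
    (k c₁ : ℕ) (hk : 1 ≤ k) (c₂ C : ℝ) (hc₂ : 0 ≤ c₂) (hC : 0 < C)
    (T : ℕ → ℝ → ℝ)
    (hbase : ∀ m : ℝ, 0 ≤ m → T 0 m ≤ C * (m + 1))
    (hrec : ∀ L : ℕ, ∀ m : ℝ, 0 ≤ m →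
      ∃ m₁ m₂ : ℝ, 0 ≤ m₁ ∧ 0 ≤ m₂ ∧ m₁ + m₂ = m + c₂ ∧
        T (L + 1) m ≤ T L m₁ + T L m₂ +
          C * (m * (2 : ℝ) ^ (((L : ℝ) + 1) / k) +
               (2 : ℝ) ^ (L + 1) * ((L : ℝ) + 1) ^ c₁)) :
    ∃ C' : ℝ, 0 < C' ∧ ∀ L : ℕ, ∀ m : ℝ, 0 ≤ m →
      T L m ≤ C' * (m * (2 : ℝ) ^ ((L : ℝ) / k) +
                    (2 : ℝ) ^ L * ((L : ℝ) + 1) ^ (c₁ + 1)) := by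
  have hk1 : (1:ℝ) ≤ (k:ℝ) := by exact_mod_cast hk
  have hk0 : (0:ℝ) < (k:ℝ) := lt_of_lt_of_le one_pos hk1
  set r : ℝ := (2:ℝ) ^ ((1:ℝ)/(k:ℝ)) with hr_def
  have hr_pos : 0 < r := Real.rpow_pos_of_pos (by norm_num) _
  have hr_le2 : r ≤ 2 := by
    have : r ≤ (2:ℝ) ^ (1:ℝ) := by
      apply Real.rpow_le_rpow_of_exponent_le (by norm_num)
      rw [div_le_one hk0]; exact hk1
    simpa using this
  have hr_lb : 1 + 1/(2*(k:ℝ)) ≤ r := by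
    have h1 : r = Real.exp (Real.log 2 * (1/(k:ℝ))) := by
      rw [hr_def, Real.rpow_def_of_pos (by norm_num)]
    have h2 : Real.log 2 * (1/(k:ℝ)) + 1 ≤ Real.exp (Real.log 2 * (1/(k:ℝ))) :=
      Real.add_one_le_exp _
    have h3 : (0.6931471803 : ℝ) < Real.log 2 := Real.log_two_gt_d9
    have hik : (0:ℝ) < 1/(k:ℝ) := by positivity
    have h4 : 1/(2*(k:ℝ)) ≤ Real.log 2 * (1/(k:ℝ)) := by
      have h5 : (1/2 : ℝ) * (1/(k:ℝ)) ≤ Real.log 2 * (1/(k:ℝ)) :=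
        mul_le_mul_of_nonneg_right (by linarith) hik.le
      calc 1/(2*(k:ℝ)) = (1/2 : ℝ) * (1/(k:ℝ)) := by ring
        _ ≤ Real.log 2 * (1/(k:ℝ)) := h5
    linarith [h1 ▸ h2]
  set A : ℝ := 4*(k:ℝ)*C with hA_def
  have hA_pos : 0 < A := by positivity
  have hCA : C ≤ A := by nlinarith
  have hkey : A + C*r ≤ A*r := by
    have hc1 : A * (1/(2*(k:ℝ))) = 2*C := by rw [hA_def]; field_simp; ring
    have hc2 : A * (1/(2*(k:ℝ))) ≤ A * (r - 1) :=
      mul_le_mul_of_nonneg_left (by linarith) hA_pos.le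
    have hc3 : C * r ≤ C * 2 := mul_le_mul_of_nonneg_left hr_le2 hC.le
    nlinarith
  set B : ℝ := C + A*c₂ with hB_def
  have hB_pos : 0 < B := by positivity
  clear_value r A B
  have main : ∀ L : ℕ, ∀ m : ℝ, 0 ≤ m →
      T L m ≤ A*m*(2:ℝ)^((L:ℝ)/(k:ℝ)) + B*(2:ℝ)^L*((L:ℝ)+1)^(c₁+1) := by
    intro L
    induction L with
    | zero =>
      intro m hm
      have h := hbase m hm
      have hz : ((0:ℕ):ℝ)/(k:ℝ) = 0 := by simp
      rw [hz, Real.rpow_zero]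
      have hAc : 0 ≤ A*c₂ := by positivity
      simp only [pow_zero, Nat.cast_zero, zero_add, one_pow, mul_one]
      rw [hB_def]
      nlinarith
    | succ L ih =>
      intro m hm
      obtain ⟨m₁, m₂, hm₁, hm₂, hsum, hT⟩ := hrec L m hm
      have e1 := ih m₁ hm₁
      have e2 := ih m₂ hm₂
      set p : ℝ := (2:ℝ)^((L:ℝ)/(k:ℝ)) with hp_def
      set E : ℝ := (2:ℝ)^L with hE_def
      set P : ℝ := ((L:ℝ)+1)^(c₁+1) with hP_def
      set Q : ℝ := ((L:ℝ)+1)^c₁ with hQ_def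
      clear_value p E P Q
      have hp_pos : 0 < p := by rw [hp_def]; positivity
      have hE_pos : 0 < E := by rw [hE_def]; positivity
      have hP_pos : 0 < P := by rw [hP_def]; positivity
      have hQ_pos : 0 < Q := by rw [hQ_def]; positivity
      have hq : (2:ℝ)^(((L:ℝ)+1)/(k:ℝ)) = p * r := by
        rw [show ((L:ℝ)+1)/(k:ℝ) = (L:ℝ)/(k:ℝ) + 1/(k:ℝ) from by ring,
          Real.rpow_add (by norm_num), hp_def, hr_def]
      have hcast : (((L+1:ℕ)):ℝ) = (L:ℝ)+1 := by push_cast; ring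
      have hple : p ≤ E := by
        rw [hp_def, hE_def]
        have h1 : (2:ℝ)^((L:ℝ)/(k:ℝ)) ≤ (2:ℝ)^((L:ℝ)) := by
          apply Real.rpow_le_rpow_of_exponent_le (by norm_num)
          rw [div_le_iff₀ hk0]; nlinarith [Nat.cast_nonneg (α := ℝ) L]
        rwa [Real.rpow_natCast] at h1
      have hQ1 : (1:ℝ) ≤ Q := by
        rw [hQ_def]; exact one_le_pow₀ (by linarith [Nat.cast_nonneg (α := ℝ) L])
      have hbin : P + Q ≤ ((L:ℝ)+2)^(c₁+1) := by
        have hL0 : (0:ℝ) ≤ (L:ℝ)+1 := by positivity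
        have h1 : Q ≤ ((L:ℝ)+2)^c₁ := by
          rw [hQ_def]; exact pow_le_pow_left₀ hL0 (by linarith) _
        calc P + Q = ((L:ℝ)+2) * Q := by rw [hP_def, hQ_def]; ring
          _ ≤ ((L:ℝ)+2) * ((L:ℝ)+2)^c₁ := mul_le_mul_of_nonneg_left h1 (by positivity)
          _ = ((L:ℝ)+2)^(c₁+1) := by ring
      -- key product inequalities
      have h1 : A*m*p + C*(m*(p*r)) ≤ A*m*(p*r) := by
        have := mul_le_mul_of_nonneg_right hkey (mul_nonneg hm hp_pos.le)
        nlinarith [this]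
      have h2 : A*c₂*p ≤ 2*(A*c₂)*(E*Q) := by
        have hac : (0:ℝ) ≤ A*c₂ := by positivity
        have hEQ : p ≤ 2*(E*Q) := by nlinarith [mul_le_mul_of_nonneg_left hQ1 hE_pos.le]
        nlinarith [mul_le_mul_of_nonneg_left hEQ hac]
      have h3 : 2*B*E*(P + Q) ≤ 2*B*E*((L:ℝ)+2)^(c₁+1) :=
        mul_le_mul_of_nonneg_left hbin (by positivity)
      have hA_sum : A*m₁*p + A*m₂*p = A*m*p + A*c₂*p := by
        rw [show A*m₁*p + A*m₂*p = A*(m₁+m₂)*p from by ring, hsum]; ring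
      have hBQ : 2*B*(E*Q) = 2*C*(E*Q) + 2*(A*c₂)*(E*Q) := by rw [hB_def]; ring
      -- assemble
      rw [show (((L+1:ℕ)):ℝ)/(k:ℝ) = ((L:ℝ)+1)/(k:ℝ) from by rw [hcast], hq, hcast,
        pow_succ, show ((L:ℝ)+1+1) = ((L:ℝ)+2) from by ring]
      rw [pow_succ, hq, ← hE_def] at hT
      rw [← hE_def]
      linarith [hT, e1, e2, h1, h2, h3, hA_sum, hBQ]
  refine ⟨A + B, by positivity, fun L m hm => ?_⟩
  have h := main L m hm
  have hp_pos : (0:ℝ) < (2:ℝ)^((L:ℝ)/(k:ℝ)) := Real.rpow_pos_of_pos (by norm_num) _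
  have hP : (0:ℝ) < (2:ℝ)^L * ((L:ℝ)+1)^(c₁+1) := by positivity
  nlinarith [mul_nonneg hm hp_pos.le, mul_nonneg hB_pos.le (mul_nonneg hm hp_pos.le)]
end

section
/- Let V be a finite type, r ∈ V, and parent : V → V a function with parent(r) = r and such that for every v ∈ V there exists k ∈ ℕ with parent^[k](v) = r (so (V, parent, r) is a finite rooted tree). Let w : V → ℕ be vertex weights with total weight n = ∑_{v ∈ V} w(v). For each v ∈ V define the subtree weight c(v) = ∑ { w(u) : u ∈ V, ∃ k, parent^[k](u) = v }. Then there exists a vertex v ∈ V satisfying at least one of: (i) n ≤ 3·c(v) and 3·c(v) ≤ 2n; (ii) 3·w(v) ≥ 2n; (iii) 3·c(v) > 2n and every u ≠ v with parent(u) = v has 3·c(u) < n. -/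
open scoped Classical

/-- Tree-search claim inside the balanced vertical chord lemma: in a finite
rooted tree with vertex weights `w` and subtree weights `c`, total weight `n`,
there is a vertex `v` with (i) `n/3 ≤ c(v) ≤ 2n/3`, or (ii) `w(v) ≥ 2n/3`, or
(iii) `c(v) > 2n/3` while every child of `v` has subtree weight `< n/3`. -/
theorem balanced_subtree_vertex_exists
    (V : Type*) [Fintype V] (r : V) (parent : V → V)
    (hroot : parent r = r)
    (hreach : ∀ v : V, ∃ k : ℕ, parent^[k] v = r)
    (w : V → ℕ) (n : ℕ) (hn : n = ∑ v : V, w v)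
    (c : V → ℕ)
    (hc : ∀ v : V, c v = ∑ u ∈ Finset.univ.filter (fun u => ∃ k : ℕ, parent^[k] u = v), w u) :
    ∃ v : V,
      (n ≤ 3 * c v ∧ 3 * c v ≤ 2 * n) ∨
      (2 * n ≤ 3 * w v) ∨
      (2 * n < 3 * c v ∧ ∀ u : V, u ≠ v → parent u = v → 3 * c u < n) := by
  classical
  have hcr : c r = n := by
    rw [hc, hn]
    congr 1
    exact Finset.filter_true_of_mem (fun u _ => hreach u)
  rcases Nat.eq_zero_or_pos n with h0 | hpos
  · exact ⟨r, Or.inl ⟨by omega, by omega⟩⟩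
  · set S := Finset.univ.filter (fun v => 2 * n < 3 * c v) with hS
    have hSne : S.Nonempty := ⟨r, by simp [hS, hcr]; omega⟩
    obtain ⟨v, hvS, hmax⟩ := S.exists_max_image (fun v => Nat.find (hreach v)) hSne
    have hv : 2 * n < 3 * c v := (Finset.mem_filter.mp hvS).2
    -- every child of v is not in S
    have hchild : ∀ u : V, u ≠ v → parent u = v → 3 * c u ≤ 2 * n := by
      intro u hu hpu
      by_contra hlt
      push_neg at hlt
      have huS : u ∈ S := Finset.mem_filter.mpr ⟨Finset.mem_univ u, hlt⟩
      have hle := hmax u huS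
      -- show Nat.find (hreach v) < Nat.find (hreach u)
      have hk := Nat.find_spec (hreach u)
      set k := Nat.find (hreach u) with hkdef
      have hk0 : k ≠ 0 := by
        intro h
        rw [h, Function.iterate_zero_apply] at hk
        subst hk
        exact hu (by rw [← hpu, hroot])
      obtain ⟨m, hm⟩ := Nat.exists_eq_succ_of_ne_zero hk0
      rw [hm] at hk
      have hvm : parent^[m] v = r := by
        rw [← hpu, ← Function.iterate_succ_apply]
        exact hk
      have : Nat.find (hreach v) ≤ m := Nat.find_le hvm
      omega
    by_cases hex : ∃ u : V, u ≠ v ∧ parent u = v ∧ n ≤ 3 * c u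
    · obtain ⟨u, hu, hpu, hn3⟩ := hex
      exact ⟨u, Or.inl ⟨hn3, hchild u hu hpu⟩⟩
    · push_neg at hex
      refine ⟨v, Or.inr (Or.inr ⟨hv, fun u hu hpu => hex u hu hpu⟩)⟩
end
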